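/- arXiv:0705.2000 — 3 statements merged into one kernel-verified Lean document; each statement's English description precedes it below -/
import Mathlib

section
/- With H(t) = ((sinh²t + t²)cosh t − 2t sinh t)/sinh³t, the improper integral ∫₀^∞ (H(r²/2) − 1) r dr converges and equals −1/2. -/
/-!
With `u = t / sinh t`, the function `G t = u e^{-t} - u² / 2`, i.e. `t coth t - t - t² / (2 sinh² t)`,
is a primitive of `H - 1`, so `F r = G (r² / 2)` is a primitive of the integrand. As `u → 1` for
`t → 0⁺` and `u → 0` for `t → ∞`, `F` runs from `1 / 2` to `0`, and the integral is `-1 / 2`.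

Integrability needs no estimates: the numerator of `H` is `(sinh t - t)² cosh t + 2 t sinh t (cosh t - 1)`,
so `H ≥ 0` and `F + r² / 2` is monotone near `0`, while `H ≥ 1` for `t ≥ 2`, so `F` is monotone near `∞`.
A monotone function with finite limits has an integrable derivative.
-/

open Real Filter MeasureTheory Set Topology

/-- The pair correlation scaling function. -/
noncomputable def Hfun (t : ℝ) : ℝ :=
  ((Real.sinh t ^ 2 + t ^ 2) * Real.cosh t - 2 * t * Real.sinh t) / (Real.sinh t) ^ 3

lemma Hfun_nonneg {t : ℝ} (ht : 0 ≤ t) : 0 ≤ Hfun t := by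
  have hs : 0 ≤ sinh t := sinh_nonneg_iff.2 ht
  have hnum : (sinh t ^ 2 + t ^ 2) * cosh t - 2 * t * sinh t
      = (sinh t - t) ^ 2 * cosh t + 2 * t * sinh t * (cosh t - 1) := by ring
  have hc : 1 ≤ cosh t := one_le_cosh t
  rw [Hfun, hnum]
  positivity

lemma one_le_Hfun {t : ℝ} (ht : 2 ≤ t) : 1 ≤ Hfun t := by
  have hs : 0 < sinh t := sinh_pos_iff.2 (by linarith)
  have hsc : sinh t < cosh t := sinh_lt_cosh t
  have key : 0 ≤ sinh t ^ 2 * (cosh t - sinh t) + t * (t * cosh t - 2 * sinh t) :=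
    add_nonneg (mul_nonneg (sq_nonneg _) (by linarith))
      (mul_nonneg (by linarith) (by nlinarith))
  rw [Hfun, one_le_div (by positivity)]
  linear_combination key

noncomputable def Gfun (t : ℝ) : ℝ := t / sinh t * exp (-t) - (t / sinh t) ^ 2 / 2

lemma hasDerivAt_Gfun {t : ℝ} (ht : t ≠ 0) : HasDerivAt Gfun (Hfun t - 1) t := by
  have hs : sinh t ≠ 0 := sinh_ne_zero.2 ht
  have hu : HasDerivAt (fun t => t / sinh t) ((1 * sinh t - t * cosh t) / sinh t ^ 2) t :=
    (hasDerivAt_id t).div (hasDerivAt_sinh t) hs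
  refine ((hu.mul (hasDerivAt_neg t).exp).sub ((hu.pow 2).div_const 2)).congr_deriv ?_
  norm_num [Hfun]
  rw [← cosh_sub_sinh]
  field_simp
  linear_combination (-t * sinh t) * cosh_sq t

lemma tendsto_div_sinh_nhdsNE_zero : Tendsto (fun t => t / sinh t) (𝓝[≠] 0) (𝓝 1) := by
  have h := hasDerivAt_iff_tendsto_slope.1 (hasDerivAt_sinh 0)
  rw [cosh_zero] at h
  simpa [slope_def_field] using h.inv₀ one_ne_zero

lemma tendsto_div_sinh_atTop : Tendsto (fun t => t / sinh t) atTop (𝓝 0) := by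
  have hexp : Tendsto (fun t => exp t / t ^ 1 / 2) atTop atTop :=
    (tendsto_exp_div_pow_atTop 1).atTop_div_const two_pos
  have hneg : Tendsto (fun t => -(exp (-t) * t⁻¹ / 2)) atTop (𝓝 0) := by
    simpa using ((tendsto_exp_neg_atTop_nhds_zero.mul tendsto_inv_atTop_zero).div_const 2).neg
  refine ((hexp.atTop_add hneg).inv_tendsto_atTop).congr' ?_
  filter_upwards [eventually_ne_atTop 0] with t ht
  simp only [Pi.inv_apply, pow_one, sinh_eq]
  field_simp
  ring

lemma tendsto_Gfun_nhdsGT_zero : Tendsto Gfun (𝓝[>] 0) (𝓝 (1 / 2)) := by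
  have hu := tendsto_div_sinh_nhdsNE_zero.mono_left (nhdsGT_le_nhdsNE 0)
  have he : Tendsto (fun t => exp (-t)) (𝓝[>] 0) (𝓝 1) := by
    simpa using (continuous_neg.rexp.tendsto 0).mono_left nhdsWithin_le_nhds
  convert (hu.mul he).sub ((hu.pow 2).div_const 2) using 2 <;> first | rfl | norm_num

lemma tendsto_Gfun_atTop : Tendsto Gfun atTop (𝓝 0) := by
  have hu := tendsto_div_sinh_atTop
  convert (hu.mul tendsto_exp_neg_atTop_nhds_zero).sub ((hu.pow 2).div_const 2) using 2 <;>
    first | rfl | norm_num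

lemma hasDerivAt_sq_div_two (r : ℝ) : HasDerivAt (fun r => r ^ 2 / 2) r r := by
  simpa using (hasDerivAt_pow 2 r).div_const 2

noncomputable def Ffun : ℝ → ℝ := Function.update (fun r => Gfun (r ^ 2 / 2)) 0 (1 / 2)

lemma hasDerivAt_Ffun {r : ℝ} (hr : r ≠ 0) :
    HasDerivAt Ffun ((Hfun (r ^ 2 / 2) - 1) * r) r := by
  have hG := (hasDerivAt_Gfun (by positivity : r ^ 2 / 2 ≠ 0)).comp r (hasDerivAt_sq_div_two r)
  refine hG.congr_of_eventuallyEq ?_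
  filter_upwards [eventually_ne_nhds hr] with x hx
  exact Function.update_of_ne hx _ _

lemma continuousWithinAt_Ffun_zero : ContinuousWithinAt Ffun (Ici 0) 0 := by
  rw [Ffun, continuousWithinAt_update_same]
  refine tendsto_Gfun_nhdsGT_zero.comp
    (tendsto_nhdsWithin_of_tendsto_nhds_of_eventually_within _ ?_ ?_)
  · simpa using ((continuous_pow 2).div_const 2).tendsto' (0 : ℝ) 0 (by simp)
      |>.mono_left nhdsWithin_le_nhds
  · filter_upwards [self_mem_nhdsWithin] with r ⟨hr₀, hr⟩
    have hr : 0 < r := lt_of_le_of_ne hr₀ (Ne.symm hr)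
    exact div_pos (pow_pos hr 2) two_pos

lemma continuousOn_Ffun : ContinuousOn Ffun (Ici 0) := by
  intro r hr
  rcases (mem_Ici.1 hr).eq_or_lt with rfl | hr
  · exact continuousWithinAt_Ffun_zero
  · exact (hasDerivAt_Ffun hr.ne').continuousAt.continuousWithinAt

lemma tendsto_Ffun_atTop : Tendsto Ffun atTop (𝓝 0) := by
  refine (tendsto_Gfun_atTop.comp
    ((tendsto_pow_atTop two_ne_zero).atTop_div_const two_pos)).congr' ?_
  filter_upwards [eventually_ne_atTop 0] with r hr
  exact (Function.update_of_ne hr _ _).symm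

lemma integrableOn_Hfun_sub_one_Ioc_zero_two :
    IntegrableOn (fun r : ℝ => (Hfun (r ^ 2 / 2) - 1) * r) (Ioc 0 2) := by
  have hH : IntegrableOn (fun r => Hfun (r ^ 2 / 2) * r) (Ioc 0 2) := by
    refine intervalIntegral.integrableOn_deriv_of_nonneg (g := fun r => Ffun r + r ^ 2 / 2)
      ((continuousOn_Ffun.mono Icc_subset_Ici_self).add (by fun_prop)) (fun r hr => ?_)
      (fun r hr => mul_nonneg (Hfun_nonneg (by positivity)) hr.1.le)
    exact ((hasDerivAt_Ffun hr.1.ne').add (hasDerivAt_sq_div_two r)).congr_deriv (by ring)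
  refine (hH.sub (continuous_id.integrableOn_Icc.mono_set Ioc_subset_Icc_self)).congr_fun
    (fun r _ => by simp only [Pi.sub_apply, id_eq]; ring) measurableSet_Ioc

lemma integrableOn_Hfun_sub_one_Ioi_two :
    IntegrableOn (fun r : ℝ => (Hfun (r ^ 2 / 2) - 1) * r) (Ioi 2) :=
  integrableOn_Ioi_deriv_of_nonneg' (fun r hr => hasDerivAt_Ffun (by linarith [mem_Ici.1 hr]))
    (fun r (hr : 2 < r) => mul_nonneg (sub_nonneg.2 (one_le_Hfun (by nlinarith))) (by linarith))
    tendsto_Ffun_atTop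

/-- ∫₀^∞ (H(r²/2) − 1) r dr converges and equals −1/2. -/
theorem integral_Hfun_sub_one :
    IntegrableOn (fun r : ℝ => (Hfun (r ^ 2 / 2) - 1) * r) (Set.Ioi 0) ∧
    ∫ r in Set.Ioi (0 : ℝ), (Hfun (r ^ 2 / 2) - 1) * r = -1 / 2 := by
  have hint : IntegrableOn (fun r : ℝ => (Hfun (r ^ 2 / 2) - 1) * r) (Ioi 0) := by
    rw [← Ioc_union_Ioi_eq_Ioi zero_le_two]
    exact integrableOn_Hfun_sub_one_Ioc_zero_two.union integrableOn_Hfun_sub_one_Ioi_two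
  refine ⟨hint, ?_⟩
  rw [integral_Ioi_of_hasDerivAt_of_tendsto continuousWithinAt_Ffun_zero
    (fun r hr => hasDerivAt_Ffun (mem_Ioi.1 hr).ne') hint tendsto_Ffun_atTop]
  norm_num [Ffun]
end

section
/- For 0 ≤ s < 2, as N → ∞, N^{1+s/2} · ∫₀^{√(log N)} H(r²/2) r^{1−s} dr = (1/(2−s)) N^{1+s/2} (log N)^{1−s/2} (1 + o(1)) + O(N^{1+s/2}), where H(t) = ((sinh²t + t²)cosh t − 2t sinh t)/sinh³t. -/
/-!
Since `H(t) → 1` exponentially fast and `H` is bounded near `0`, the function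
`(H(r²/2) - 1) r^{1-s}` is integrable on `(0, ∞)`. Hence
`∫₀^T H(r²/2) r^{1-s} dr = T^{2-s}/(2-s) + O(1)`, and with `T = √(log N)` the `O(1)` term,
multiplied by `N^{1+s/2}`, is the error term; the `o(1)` term can be taken to be `0`.

Boundedness near `0` comes from writing the numerator of `H` as
`cosh t (sinh t - t)² + 2t sinh t (cosh t - 1)` and using `tanh t ≤ t`, which gives
`sinh t - t ≤ t sinh² t / 2`.
-/

open Real Filter Asymptotics intervalIntegral

open MeasureTheory Set

lemma Real.sinh_le_mul_cosh {t : ℝ} (ht : 0 ≤ t) : sinh t ≤ t * cosh t := by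
  have h := (convex_Icc 0 t).image_sub_le_mul_sub_of_deriv_le continuous_sinh.continuousOn
    differentiable_sinh.differentiableOn (C := cosh t) (fun x hx => by
      rw [interior_Icc] at hx
      rw [deriv_sinh, cosh_le_cosh, abs_of_pos hx.1, abs_of_nonneg ht]
      exact hx.2.le) 0 (left_mem_Icc.2 ht) t (right_mem_Icc.2 ht) ht
  simpa [mul_comm] using h

lemma Real.cosh_sub_one_le_sinh_sq_div_two (t : ℝ) : cosh t - 1 ≤ sinh t ^ 2 / 2 := by
  nlinarith [sinh_sq t, one_le_cosh t]

lemma Real.sinh_sub_self_le {t : ℝ} (ht : 0 ≤ t) : sinh t - t ≤ t * sinh t ^ 2 / 2 := by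
  nlinarith [sinh_le_mul_cosh ht, cosh_sub_one_le_sinh_sq_div_two t]

lemma Real.cosh_le_two {t : ℝ} (ht : |t| ≤ 1) : cosh t ≤ 2 := by
  calc cosh t ≤ cosh 1 := cosh_le_cosh.2 (by rwa [abs_one])
    _ ≤ 2 := by
      rw [cosh_eq, exp_neg]
      have : (exp 1)⁻¹ ≤ 1 := inv_le_one_of_one_le₀ (one_le_exp zero_le_one)
      linarith [exp_one_lt_d9]

lemma abs_Hfun_sub_one_le_one {t : ℝ} (h0 : 0 ≤ t) (h1 : t ≤ 1) : |Hfun t - 1| ≤ 1 := by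
  rcases h0.eq_or_lt with rfl | hpos
  · simp [Hfun]
  have hS : 0 < sinh t := sinh_pos_iff.2 hpos
  have hC1 : 1 ≤ cosh t := one_le_cosh t
  have hC2 : cosh t ≤ 2 := cosh_le_two (by rwa [abs_of_nonneg h0])
  have hSC : sinh t ≤ cosh t := (sinh_lt_cosh t).le
  have hdiff := sinh_sub_self_le h0
  have hnum : (sinh t ^ 2 + t ^ 2) * cosh t - 2 * t * sinh t
      = cosh t * (sinh t - t) ^ 2 + 2 * t * sinh t * (cosh t - 1) := by ring
  have hnum_nonneg : 0 ≤ (sinh t ^ 2 + t ^ 2) * cosh t - 2 * t * sinh t := by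
    rw [hnum]
    have : 0 ≤ cosh t - 1 := by linarith
    positivity
  have hnum_le : (sinh t ^ 2 + t ^ 2) * cosh t - 2 * t * sinh t ≤ 2 * sinh t ^ 3 := by
    have hsq : (sinh t - t) ^ 2 ≤ (t * sinh t ^ 2 / 2) ^ 2 :=
      pow_le_pow_left₀ (by linarith [self_le_sinh_iff.2 h0]) hdiff 2
    have hfirst : cosh t * (sinh t - t) ^ 2 ≤ sinh t ^ 3 := by
      have : cosh t * t ^ 2 * sinh t ≤ 4 := by
        have : t ^ 2 ≤ 1 := by nlinarith
        have : cosh t * t ^ 2 ≤ 2 := by nlinarith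
        nlinarith
      calc cosh t * (sinh t - t) ^ 2 ≤ cosh t * (t * sinh t ^ 2 / 2) ^ 2 := by gcongr
        _ = (cosh t * t ^ 2 * sinh t / 4) * sinh t ^ 3 := by ring
        _ ≤ 1 * sinh t ^ 3 := by gcongr; linarith
        _ = sinh t ^ 3 := one_mul _
    have hsecond : 2 * t * sinh t * (cosh t - 1) ≤ sinh t ^ 3 := by
      calc 2 * t * sinh t * (cosh t - 1) ≤ 2 * t * sinh t * (sinh t ^ 2 / 2) := by
            gcongr; exact cosh_sub_one_le_sinh_sq_div_two t
        _ = t * sinh t ^ 3 := by ring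
        _ ≤ 1 * sinh t ^ 3 := by gcongr
        _ = sinh t ^ 3 := one_mul _
    linarith
  have hS3 : 0 < sinh t ^ 3 := by positivity
  rw [abs_le, Hfun]
  constructor
  · linarith [div_nonneg hnum_nonneg hS3.le]
  · linarith [(div_le_iff₀ hS3).2 hnum_le]

lemma abs_Hfun_sub_one_le_of_one_le {t : ℝ} (ht : 1 ≤ t) : |Hfun t - 1| ≤ 128 * exp (-t) := by
  have hE : 1 + t + t ^ 2 / 2 ≤ exp t := quadratic_le_exp_of_nonneg (by linarith)
  have hEinv : exp (-t) = (exp t)⁻¹ := exp_neg t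
  have hS_lo : exp t / 4 ≤ sinh t := by
    rw [sinh_eq, hEinv]; nlinarith [mul_inv_cancel₀ (exp_pos t).ne']
  have hS_hi : sinh t ≤ exp t / 2 := by
    rw [sinh_eq]; linarith [exp_pos (-t)]
  have hC : cosh t ≤ exp t := by
    rw [cosh_eq]; linarith [exp_le_exp.2 (show -t ≤ t by linarith)]
  have hS : 0 < sinh t := by linarith [exp_pos t]
  have hS3 : exp t ^ 3 / 64 ≤ sinh t ^ 3 := by
    calc exp t ^ 3 / 64 = (exp t / 4) ^ 3 := by ring
      _ ≤ sinh t ^ 3 := by gcongr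
  have hdiff : Hfun t - 1
      = (sinh t ^ 2 * exp (-t) + t ^ 2 * cosh t - 2 * t * sinh t) / sinh t ^ 3 := by
    rw [Hfun, ← cosh_sub_sinh]; field_simp; ring
  have hnum : |sinh t ^ 2 * exp (-t) + t ^ 2 * cosh t - 2 * t * sinh t| ≤ 2 * exp t ^ 2 := by
    have h1 : sinh t ^ 2 * exp (-t) ≤ exp t / 4 := by
      calc sinh t ^ 2 * exp (-t) ≤ (exp t / 2) ^ 2 * exp (-t) := by gcongr
        _ = exp t / 4 := by rw [hEinv]; field_simp; ring
    have h2 : t ^ 2 * cosh t ≤ t ^ 2 * exp t := by gcongr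
    have h3 : 2 * t * sinh t ≤ t * exp t := by nlinarith
    have h4 : 0 ≤ sinh t ^ 2 * exp (-t) + t ^ 2 * cosh t := by positivity
    have h5 : t * exp t ≤ 2 * exp t ^ 2 := by nlinarith [exp_pos t]
    have h6 : exp t / 4 + t ^ 2 * exp t ≤ 2 * exp t ^ 2 := by nlinarith [exp_pos t]
    rw [abs_le]; constructor <;> nlinarith [mul_pos hS (by linarith : (0:ℝ) < t)]
  rw [hdiff, abs_div, abs_of_pos (pow_pos hS 3), div_le_iff₀ (by positivity)]
  calc _ ≤ 2 * exp t ^ 2 := hnum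
    _ = 128 * exp (-t) * (exp t ^ 3 / 64) := by rw [hEinv]; field_simp; norm_num
    _ ≤ 128 * exp (-t) * sinh t ^ 3 := by gcongr

lemma abs_Hfun_sub_one_le {t : ℝ} (ht : 0 ≤ t) : |Hfun t - 1| ≤ 128 * exp (-t) := by
  rcases le_total t 1 with h1 | h1
  · calc |Hfun t - 1| ≤ 1 := abs_Hfun_sub_one_le_one ht h1
      _ ≤ 128 * exp (-1) := by
        rw [exp_neg, ← div_eq_mul_inv, le_div_iff₀ (exp_pos 1)]; linarith [exp_one_lt_d9]
      _ ≤ 128 * exp (-t) := by gcongr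
  · exact abs_Hfun_sub_one_le_of_one_le h1

lemma measurable_Hfun : Measurable Hfun := by
  unfold Hfun
  fun_prop

lemma integrableOn_Hfun_sq_half_sub_one_mul_rpow {p : ℝ} (hp : -1 < p) :
    IntegrableOn (fun r => (Hfun (r ^ 2 / 2) - 1) * r ^ p) (Ioi 0) := by
  refine Integrable.mono'
    ((integrableOn_rpow_mul_exp_neg_mul_sq (b := 1 / 2) (by norm_num) hp).const_mul 128)
    (((measurable_Hfun.comp (by fun_prop)).sub measurable_const).mul
      (by fun_prop)).aestronglyMeasurable ?_
  filter_upwards [self_mem_ae_restrict measurableSet_Ioi] with r (hr : 0 < r)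
  rw [norm_mul, norm_eq_abs, norm_of_nonneg (rpow_nonneg hr.le p)]
  calc |Hfun (r ^ 2 / 2) - 1| * r ^ p ≤ 128 * exp (-(r ^ 2 / 2)) * r ^ p := by
        gcongr; exact abs_Hfun_sub_one_le (by positivity)
    _ = 128 * (r ^ p * exp (-(1 / 2) * r ^ 2)) := by ring_nf

lemma isBigO_integral_Hfun_sq_half_mul_rpow_sub {p : ℝ} (hp : -1 < p) :
    (fun T => (∫ r in (0:ℝ)..T, Hfun (r ^ 2 / 2) * r ^ p) - T ^ (p + 1) / (p + 1))
      =O[atTop] (fun _ => (1 : ℝ)) := by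
  set f := fun r : ℝ => (Hfun (r ^ 2 / 2) - 1) * r ^ p
  have hf : IntegrableOn f (Ioi 0) := integrableOn_Hfun_sq_half_sub_one_mul_rpow hp
  refine IsBigO.of_bound (∫ r in Ioi 0, |f r|) ?_
  filter_upwards [eventually_ge_atTop 0] with T hT
  have hfT : IntervalIntegrable f volume 0 T :=
    (intervalIntegrable_iff_integrableOn_Ioc_of_le hT).2 (hf.mono_set Ioc_subset_Ioi_self)
  have hsplit : (∫ r in (0:ℝ)..T, Hfun (r ^ 2 / 2) * r ^ p)
      = (∫ r in (0:ℝ)..T, r ^ p) + ∫ r in (0:ℝ)..T, f r := by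
    rw [← integral_add (intervalIntegrable_rpow' hp) hfT]
    congr 1; ext r; simp only [f]; ring
  rw [hsplit, integral_rpow (Or.inl hp), zero_rpow (by linarith), sub_zero, add_sub_cancel_left,
    norm_one, mul_one, integral_of_le hT]
  calc ‖∫ r in Ioc 0 T, f r‖ ≤ ∫ r in Ioc 0 T, |f r| := norm_integral_le_integral_norm _
    _ ≤ ∫ r in Ioi 0, |f r| :=
      setIntegral_mono_set hf.abs (.of_forall fun _ => abs_nonneg _) Ioc_subset_Ioi_self.eventuallyLE

theorem near_diagonal_s_energy_general (s : ℝ) (hs2 : s < 2) :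
    ∃ e E : ℝ → ℝ,
      Tendsto e atTop (nhds 0) ∧
      E =O[atTop] (fun N : ℝ => N ^ (1 + s / 2)) ∧
      ∀ᶠ N : ℝ in atTop,
        N ^ (1 + s / 2) * (∫ r in (0:ℝ)..Real.sqrt (Real.log N), Hfun (r ^ 2 / 2) * r ^ (1 - s))
          = (1 / (2 - s)) * N ^ (1 + s / 2) * (Real.log N) ^ (1 - s / 2) * (1 + e N) + E N := by
  set g := fun T =>
    (∫ r in (0:ℝ)..T, Hfun (r ^ 2 / 2) * r ^ (1 - s)) - T ^ (1 - s + 1) / (1 - s + 1)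
  have hg : g =O[atTop] (fun _ => (1 : ℝ)) :=
    isBigO_integral_Hfun_sq_half_mul_rpow_sub (by linarith)
  have hT : Tendsto (fun N => √(log N)) atTop atTop := tendsto_sqrt_atTop.comp tendsto_log_atTop
  refine ⟨fun _ => 0, fun N => N ^ (1 + s / 2) * g √(log N), tendsto_const_nhds, ?_, ?_⟩
  · simpa using (isBigO_refl (fun N : ℝ => N ^ (1 + s / 2)) atTop).mul (hg.comp_tendsto hT)
  · filter_upwards [eventually_ge_atTop 1] with N hN
    have hpow : √(log N) ^ (1 - s + 1) = log N ^ (1 - s / 2) := by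
      rw [sqrt_eq_rpow, ← rpow_mul (log_nonneg hN)]; ring_nf
    simp only [g, hpow]
    ring

/-- For 0 ≤ s < 2, N^{1+s/2}∫₀^{√log N} H(r²/2) r^{1−s} dr
  = (1/(2−s)) N^{1+s/2}(log N)^{1−s/2}(1 + o(1)) + O(N^{1+s/2}). -/
theorem near_diagonal_s_energy (s : ℝ) (hs0 : 0 ≤ s) (hs2 : s < 2) :
    ∃ e E : ℝ → ℝ,
      Tendsto e atTop (nhds 0) ∧
      E =O[atTop] (fun N : ℝ => N ^ (1 + s / 2)) ∧
      ∀ᶠ N : ℝ in atTop,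
        N ^ (1 + s / 2) * (∫ r in (0:ℝ)..Real.sqrt (Real.log N), Hfun (r ^ 2 / 2) * r ^ (1 - s))
          = (1 / (2 - s)) * N ^ (1 + s / 2) * (Real.log N) ^ (1 - s / 2) * (1 + e N) + E N :=
  near_diagonal_s_energy_general s hs2
end

section
/- The function H(t) = ((sinh²t + t²)cosh t − 2t sinh t)/sinh³t extends continuously to t = 0 with H(0) = 0, and H(t) > 0 for all t > 0. -/
/-!
With `s = sinh t` and `c = cosh t`, the numerator of `H` equals `c (s - t)² + 2 t s (c - 1)`,
which is positive for `t > 0`. The tangent-line bounds `s ≤ t c` and `c - 1 ≤ t s` (convexity of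
`sinh` and `cosh` on `[0, ∞)`) give `s - t ≤ t (c - 1) ≤ t² s`, hence `0 < H t ≤ t³ c + 2 t` for
`t > 0`, and `H t → 0` by squeezing.
-/

open Real Filter

theorem sub_le_deriv_mul_sub_of_monotoneOn {f : ℝ → ℝ} (hf : Differentiable ℝ f) {a b : ℝ}
    (hab : a ≤ b) (hf' : MonotoneOn (deriv f) (Set.Icc a b)) :
    f b - f a ≤ deriv f b * (b - a) := by
  have hb : b ∈ Set.Icc a b := ⟨hab, le_rfl⟩
  refine (convex_Icc a b).image_sub_le_mul_sub_of_deriv_le hf.continuous.continuousOn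
    hf.differentiableOn (fun x hx => ?_) a ⟨le_rfl, hab⟩ b hb hab
  have hx' := interior_subset hx
  exact hf' hx' hb hx'.2

namespace Real

theorem sinh_le_mul_cosh_s17 {t : ℝ} (ht : 0 ≤ t) : sinh t ≤ t * cosh t := by
  have h := sub_le_deriv_mul_sub_of_monotoneOn differentiable_sinh ht
    (deriv_sinh ▸ cosh_strictMonoOn.monotoneOn.mono Set.Icc_subset_Ici_self)
  simpa [deriv_sinh, mul_comm] using h

theorem cosh_sub_one_le_mul_sinh {t : ℝ} (ht : 0 ≤ t) : cosh t - 1 ≤ t * sinh t := by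
  have h := sub_le_deriv_mul_sub_of_monotoneOn differentiable_cosh ht
    (deriv_cosh ▸ sinh_strictMono.monotone.monotoneOn _)
  simpa [deriv_cosh, mul_comm] using h

end Real

theorem Hfun_eq (t : ℝ) :
    Hfun t = (cosh t * (sinh t - t) ^ 2 + 2 * t * sinh t * (cosh t - 1)) / sinh t ^ 3 := by
  rw [Hfun]
  ring

theorem Hfun_pos {t : ℝ} (ht : 0 < t) : 0 < Hfun t := by
  have hs : 0 < sinh t := sinh_pos_iff.mpr ht
  have hc : 1 < cosh t := one_lt_cosh.mpr ht.ne'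
  rw [Hfun_eq]
  have : 0 < 2 * t * sinh t * (cosh t - 1) := by
    have := sub_pos.mpr hc
    positivity
  positivity

theorem Hfun_le {t : ℝ} (ht : 0 < t) : Hfun t ≤ t ^ 3 * cosh t + 2 * t := by
  have hs : t < sinh t := self_lt_sinh_iff.mpr ht
  have hv : cosh t - 1 ≤ t * sinh t := cosh_sub_one_le_mul_sinh ht.le
  have hv0 : 0 ≤ cosh t - 1 := sub_nonneg.mpr (one_le_cosh t)
  have hu : sinh t - t ≤ t ^ 2 * sinh t := by
    nlinarith [sinh_le_mul_cosh_s17 ht.le]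
  have hnum : cosh t * (sinh t - t) ^ 2 + 2 * t * sinh t * (cosh t - 1)
      ≤ sinh t ^ 2 * (t ^ 4 * cosh t + 2 * t ^ 2) := by
    have hu2 : (sinh t - t) ^ 2 ≤ (t ^ 2 * sinh t) ^ 2 := pow_le_pow_left₀ (by linarith) hu 2
    nlinarith [cosh_pos t]
  rw [Hfun_eq, div_le_iff₀ (by positivity)]
  calc _ ≤ sinh t ^ 2 * (t ^ 4 * cosh t + 2 * t ^ 2) := hnum
    _ = sinh t ^ 2 * t * (t ^ 3 * cosh t + 2 * t) := by ring
    _ ≤ sinh t ^ 2 * sinh t * (t ^ 3 * cosh t + 2 * t) := by gcongr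
    _ = _ := by ring

/-- H extends continuously to 0 with H(0) = 0, and H(t) > 0 for all t > 0. -/
theorem Hfun_continuous_at_zero_and_pos :
    Tendsto Hfun (nhdsWithin 0 (Set.Ioi 0)) (nhds 0) ∧ ∀ t : ℝ, 0 < t → 0 < Hfun t := by
  refine ⟨?_, fun t ht => Hfun_pos ht⟩
  have hbound : Tendsto (fun t : ℝ => t ^ 3 * cosh t + 2 * t) (nhdsWithin 0 (Set.Ioi 0))
      (nhds 0) :=
    ((by fun_prop : Continuous fun t : ℝ => t ^ 3 * cosh t + 2 * t).tendsto' 0 0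
      (by simp)).mono_left nhdsWithin_le_nhds
  refine tendsto_of_tendsto_of_tendsto_of_le_of_le' tendsto_const_nhds hbound ?_ ?_ <;>
    filter_upwards [self_mem_nhdsWithin] with t ht
  exacts [(Hfun_pos ht).le, Hfun_le ht]
end
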